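/- Let n ≥ 2, let r ≡ 2 (mod 4), r ≥ 2, let π ∈ A_{r,n} and π₀ = s(p(π)). Then ℓ_𝒜(π₀) = ℓ_G(p(π)), where ℓ_𝒜 is word length in A_{r,n} with respect to 𝒜 and ℓ_G is word length in G_{r/2,n} with respect to its Coxeter-like generators {s_0, s_1, …, s_{n−1}}. -/

import Mathlib

open Multiplicative

namespace ACP

/-- The action of `Sₙ` on color vectors by permuting coordinates. -/
def permAct (r n : ℕ) : Equiv.Perm (Fin n) →* MulAut (Fin n → Multiplicative (ZMod r)) where
  toFun τ :=
    { toFun := fun z => z ∘ τ.symm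
      invFun := fun z => z ∘ τ
      left_inv := fun z => by ext i; simp
      right_inv := fun z => by ext i; simp
      map_mul' := fun z w => rfl }
  map_one' := by ext z i; rfl
  map_mul' a b := by ext z i; rfl

/-- The group of colored permutations `G_{r,n} = ℤ_r ≀ Sₙ`. -/
abbrev G (r n : ℕ) : Type := (Fin n → Multiplicative (ZMod r)) ⋊[permAct r n] Equiv.Perm (Fin n)

/-- The Coxeter-like generators: `gen r n 0 = s₀` colors the digit 1 by one color,
`gen r n i = sᵢ` (for `1 ≤ i ≤ n-1`) is the adjacent transposition `(i, i+1)`. -/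
def gen (r n : ℕ) (i : ℕ) : G r n :=
  if h : 0 < i ∧ i < n then
    ⟨1, Equiv.swap ⟨i - 1, by omega⟩ ⟨i, h.2⟩⟩
  else
    ⟨fun j => if (j : ℕ) = 0 then ofAdd (1 : ZMod r) else 1, 1⟩

def zmod2ToUnits : Multiplicative (ZMod 2) →* ℤˣ where
  toFun z := (-1) ^ (toAdd z).val
  map_one' := rfl
  map_mul' := by decide

def csumHom (r n : ℕ) (hr : 2 ∣ r) :
    (Fin n → Multiplicative (ZMod r)) →* Multiplicative (ZMod 2) where
  toFun z := ofAdd (∑ i, ZMod.castHom hr (ZMod 2) (toAdd (z i)))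
  map_one' := by simp
  map_mul' z w := by
    have h : ∀ i, ZMod.castHom hr (ZMod 2) (toAdd ((z * w) i))
        = ZMod.castHom hr (ZMod 2) (toAdd (z i)) + ZMod.castHom hr (ZMod 2) (toAdd (w i)) :=
      fun i => map_add _ _ _
    simp only [h, Finset.sum_add_distrib, ofAdd_add]

/-- The sign character of `G_{r,n}` (for even `r`): sends every Coxeter-like
generator `sᵢ` to `-1`. -/
noncomputable def sgn (r n : ℕ) (hr : 2 ∣ r) : G r n →* ℤˣ :=
  SemidirectProduct.lift (zmod2ToUnits.comp (csumHom r n hr)) Equiv.Perm.sign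
    (by
      intro g
      refine MonoidHom.ext fun z => ?_
      have h1 : ∀ a x : ℤˣ, a * x * a⁻¹ = x := fun a x => by
        rw [mul_comm a x, mul_inv_cancel_right]
      simp only [MonoidHom.comp_apply, MulEquiv.coe_toMonoidHom, MulAut.conj_apply, h1]
      congr 1
      show csumHom r n hr (z ∘ g.symm) = csumHom r n hr z
      unfold csumHom
      simp only [MonoidHom.coe_mk, OneHom.coe_mk]
      congr 1
      exact Equiv.sum_comp g.symm fun j => ZMod.castHom hr (ZMod 2) (toAdd (z j)))

/-- The group of alternating colored permutations `A_{r,n}`: the kernel of the sign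
character of `G_{r,n}`. -/
noncomputable def Arn (r n : ℕ) (hr : 2 ∣ r) : Subgroup (G r n) := (sgn r n hr).ker

/-- The generators of `A_{r,n}`: `agen r n 0 = a₀ = s₀²` and
`agen r n i = aᵢ = s₀^{r/2} sᵢ` for `i ≥ 1`. -/
def agen (r n : ℕ) (i : ℕ) : G r n :=
  if i = 0 then gen r n 0 ^ 2 else gen r n 0 ^ (r / 2) * gen r n i

/-- The generating set `𝒜 = {a₀, a₁, a₁⁻¹, a₂, …, a_{n-1}}` of `A_{r,n}`. -/
def Aset (r n : ℕ) : Set (G r n) :=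
  {x | ∃ i ≤ n - 1, x = agen r n i} ∪ {(agen r n 1)⁻¹}

/-- The Coxeter-like generating set `{s₀, …, s_{n-1}}` of `G_{r,n}`. -/
def Sset (r n : ℕ) : Set (G r n) := {x | ∃ i < n, x = gen r n i}

/-- Word length of `g` with respect to a generating set `B`. -/
noncomputable def wordLength {H : Type*} [Group H] (B : Set H) (g : H) : ℕ :=
  sInf {k | ∃ w : List H, (∀ x ∈ w, x ∈ B) ∧ w.prod = g ∧ w.length = k}

/-- The element `a₁² ∈ A_{r,n}`. -/
noncomputable def a1sq (r n : ℕ) (hr : 2 ∣ r) : ↥(Arn r n hr) :=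
  ⟨agen r n 1 ^ 2, by rw [Arn, MonoidHom.mem_ker, map_pow]; exact Int.units_sq _⟩

/-- The operator `a ⊘ 2` : the residue mod `r/2` of `a/2` (`a` even) or of
`(a + r/2)/2` (`a` odd). -/
def oslash (r a : ℕ) : ℕ :=
  if a % 2 = 0 then (a / 2) % (r / 2) else ((a + r / 2) / 2) % (r / 2)

/-- `z_i(π)`, the color of digit `i+1` of `π`, as a natural number in `{0, …, r-1}`. -/
def zval (r n : ℕ) (π : G r n) (i : Fin n) : ℕ := (toAdd (π.left i)).val

/-- `csum(π) = Σ z_i(π)`. -/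
def csum (r n : ℕ) (π : G r n) : ℕ := ∑ i, zval r n π i

/-- Rank of the colored letter `b^{[c]}` (with `1 ≤ b ≤ n`, `0 ≤ c ≤ r-1`) in the
length order `n^{[r-1]} < ⋯ < 1^{[1]} < 1 < 2 < ⋯ < n`. -/
def rank (r n : ℕ) (b c : ℕ) : ℕ :=
  if c = 0 then n * (r - 1) + (b - 1) else (n - b) * (r - 1) + (r - 1 - c)

/-- Rank (in the length order) of the letter in position `i` of the window of `π`. -/
def colRank (r n : ℕ) (π : G r n) (i : Fin n) : ℕ :=
  rank r n ((π.right i : ℕ) + 1) (zval r n π (π.right i))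

/-- The inversion number of `π ∈ G_{r,n}` with respect to the length order. -/
noncomputable def inv (r n : ℕ) (π : G r n) : ℕ :=
  Nat.card {p : Fin n × Fin n // p.1 < p.2 ∧ colRank r n π p.2 < colRank r n π p.1}

/-- The ordinary inversion number of a permutation. -/
noncomputable def invPerm (n : ℕ) (τ : Equiv.Perm (Fin n)) : ℕ :=
  Nat.card {p : Fin n × Fin n // p.1 < p.2 ∧ τ p.2 < τ p.1}

/-- The covering map `p : A_{r,n} → G_{r/2,n}`, `p(z, τ) = ((zᵢ ⊘ 2)ᵢ, τ)`. -/
def pmap (r n : ℕ) (π : G r n) : G (r / 2) n :=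
  ⟨fun i => ofAdd ((oslash r (zval r n π i) : ZMod (r / 2))), π.right⟩

/-- The section `s : G_{r/2,n} → A_{r,n}`: doubles all colors (mod `r`), adding `r/2`
to the color of the digit `1` when `inv(|π|)` is odd. -/
noncomputable def smap (r n : ℕ) (π : G (r / 2) n) : G r n :=
  ⟨fun d => ofAdd
      (((2 * zval (r / 2) n π d +
        if (d : ℕ) = 0 ∧ invPerm n π.right % 2 = 1 then r / 2 else 0 : ℕ) : ZMod r)),
   π.right⟩

/-- `c(π) = Σ_{i : z_i(π) ≠ 0} (i - 1)` (digits are `1`-based). -/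
def cstat (r n : ℕ) (π : G r n) : ℕ :=
  ∑ i : Fin n, if zval r n π i ≠ 0 then (i : ℕ) else 0

/-- The number of absolute transparent inversions of `π`. -/
noncomputable def tinv (r n : ℕ) (π : G r n) : ℕ :=
  Nat.card {p : Fin n × Fin n //
    zval r n π p.1 = r / 2 ∧ p.2 < p.1 ∧ π.right⁻¹ p.1 < π.right⁻¹ p.2}

/-- The (digit-indexed) Lehmer code `l_i = #{j : j > i, τ⁻¹(i) > τ⁻¹(j)}`. -/
noncomputable def lehmer (n : ℕ) (τ : Equiv.Perm (Fin n)) (i : Fin n) : ℕ :=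
  Nat.card {j : Fin n // i < j ∧ τ⁻¹ j < τ⁻¹ i}


/-- `μ(π)`: the minimum of `β(ω) + n(ω)` over all factorizations
`ω = b₀ s₀^{i₁} b₁ ⋯ s₀^{i_{k+1}} b_{k+1}` of `π`, where each `b_u` is a word in
`s₁, …, s_{n-1}` only, `n(ω)` is the number of letters `sᵢ` with `i ≠ 0`, and
`β(ω) = Σ_u (i_u ⊘ 2)`. -/
noncomputable def mu (r n : ℕ) (π : G r n) : ℕ :=
  sInf {m | ∃ (b₀ : List ℕ) (L : List (ℕ × List ℕ)),
    (∀ x ∈ b₀, 1 ≤ x ∧ x ≤ n - 1) ∧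
    (∀ q ∈ L, ∀ x ∈ q.2, 1 ≤ x ∧ x ≤ n - 1) ∧
    π = (b₀.map (gen r n)).prod *
        (L.map (fun q => gen r n 0 ^ q.1 * (q.2.map (gen r n)).prod)).prod ∧
    m = (L.map (fun q => oslash r q.1)).sum +
        (b₀.length + (L.map (fun q => q.2.length)).sum)}

/-- The flag-inversion number on `A_{r,n}`:
`finv_A(π) = (r/2)·inv(|π|) + Σᵢ (cᵢ(π) ⊘ 2)` where `cᵢ(π) = r - zᵢ(π⁻¹) (mod r)`. -/
noncomputable def finvA (r n : ℕ) (π : G r n) : ℕ :=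
  (r / 2) * invPerm n π.right + ∑ i, oslash r ((r - zval r n π⁻¹ i) % r)

/-- The number of (colored) right-to-left minima of `π` whose color is not in `{0, r/2}`. -/
noncomputable def rtlMinA (r n : ℕ) (π : G r n) : ℕ :=
  Nat.card {i : Fin n // (∀ j : Fin n, i < j → π.right i < π.right j) ∧
    zval r n π (π.right i) ≠ 0 ∧ zval r n π (π.right i) ≠ r / 2}

/-- The defining relators of the Coxeter-like presentation of `A_{r,n}` on generators
`x₀, …, x_{n-1}`. -/
def rels (r n : ℕ) : Set (FreeGroup (Fin n)) :=
  {w | ∃ i : Fin n, (i : ℕ) = 0 ∧ w = FreeGroup.of i ^ (r / 2)} ∪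
  {w | ∃ i : Fin n, (i : ℕ) = 1 ∧ w = FreeGroup.of i ^ 4} ∪
  {w | ∃ i : Fin n, 2 ≤ (i : ℕ) ∧ w = FreeGroup.of i ^ 2} ∪
  {w | ∃ i j : Fin n, (i : ℕ) ≠ 1 ∧ (j : ℕ) ≠ 1 ∧ (i : ℕ) + 1 < (j : ℕ) ∧
    w = FreeGroup.of i * FreeGroup.of j * (FreeGroup.of i)⁻¹ * (FreeGroup.of j)⁻¹} ∪
  {w | ∃ i j : Fin n, 1 ≤ (i : ℕ) ∧ (j : ℕ) = (i : ℕ) + 1 ∧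
    w = (FreeGroup.of i * FreeGroup.of j) ^ 3} ∪
  {w | ∃ i j : Fin n, (i : ℕ) = 0 ∧ (j : ℕ) = 1 ∧
    w = (FreeGroup.of i * FreeGroup.of j) ^ (2 * r)} ∪
  {w | ∃ i j : Fin n, (i : ℕ) = 0 ∧ (j : ℕ) = 1 ∧
    w = (FreeGroup.of i * (FreeGroup.of j)⁻¹) ^ (2 * r)} ∪
  {w | ∃ i j : Fin n, (i : ℕ) = 0 ∧ (j : ℕ) = 1 ∧
    w = FreeGroup.of i * FreeGroup.of j ^ 2 * (FreeGroup.of i)⁻¹ * (FreeGroup.of j ^ 2)⁻¹} ∪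
  {w | ∃ i j : Fin n, (i : ℕ) = 1 ∧ 2 < (j : ℕ) ∧
    w = FreeGroup.of i * FreeGroup.of j * FreeGroup.of i * (FreeGroup.of j)⁻¹}

end ACP

/-! Doubling colours, `x ↦ 2x : ℤ_{r/2} → ℤ_r`, induces a homomorphism `D : G_{r/2,n} → G_{r,n}`,
and `s(g) = t^{ε(g)} D(g)` with `t = s₀^{r/2}` and `ε(g)` the parity of `inv(|g|)`. Since
`D(s₀) = a₀`, `D(sᵢ) = sᵢ` for `i ≥ 1`, `t` is an involution commuting with `a₀` and with `sᵢ` for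
`i ≥ 2`, and left multiplication by `sᵢ` flips `ε`, every left multiplication by a generator of
`G_{r/2,n}` lifts through `s` to a left multiplication by an element of `𝒜` (`a₁⁻¹ = s₁ t` is
needed for `i = 1`); hence `ℓ_𝒜(s(g)) ≤ ℓ_G(g)`. Conversely, as `r/2` is odd, halving colours is a
homomorphism `G_{r,n} → G_{r/2,n}` that kills `t`, inverts `D`, and so is a retraction of `s`
mapping `𝒜` into the generators: `ℓ_G(g) ≤ ℓ_𝒜(s(g))`. -/

namespace ACP

open SemidirectProduct

section WordLength

variable {H K : Type*} [Group H] [Group K] {B : Set H} {C : Set K}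

theorem wordLength_le_length {w : List H} (hw : ∀ x ∈ w, x ∈ B) :
    wordLength B w.prod ≤ w.length :=
  Nat.sInf_le ⟨w, hw, rfl, rfl⟩

theorem exists_list_length_eq_wordLength {g : H} (hg : g ∈ Submonoid.closure B) :
    ∃ w : List H, (∀ x ∈ w, x ∈ B) ∧ w.prod = g ∧ w.length = wordLength B g := by
  obtain ⟨w, hw, rfl⟩ := Submonoid.exists_list_of_mem_closure hg
  exact Nat.sInf_mem (s := {k | ∃ v : List H, (∀ x ∈ v, x ∈ B) ∧ v.prod = w.prod ∧ v.length = k})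
    ⟨w.length, w, hw, rfl, rfl⟩

theorem wordLength_map_le (f : H →* K) (hf : Set.MapsTo f B C) {g : H}
    (hg : g ∈ Submonoid.closure B) : wordLength C (f g) ≤ wordLength B g := by
  obtain ⟨w, hw, rfl, hlen⟩ := exists_list_length_eq_wordLength hg
  rw [← hlen, map_list_prod, ← List.length_map f]
  exact wordLength_le_length (List.forall_mem_map.mpr fun x hx => hf (hw x hx))

theorem exists_list_lift {s : K → H} (hs₁ : s 1 = 1)
    (hs : ∀ c ∈ C, ∀ k, ∃ b ∈ B, s (c * k) = b * s k) (w : List K) (hw : ∀ x ∈ w, x ∈ C) :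
    ∃ w' : List H, (∀ x ∈ w', x ∈ B) ∧ w'.prod = s w.prod ∧ w'.length = w.length := by
  induction w with
  | nil => exact ⟨[], by simp, by simp [hs₁], rfl⟩
  | cons c w ih =>
    obtain ⟨w', hw', hprod, hlen⟩ := ih fun x hx => hw x (List.mem_cons_of_mem c hx)
    obtain ⟨b, hb, hsb⟩ := hs c (hw c List.mem_cons_self) w.prod
    exact ⟨b :: w', List.forall_mem_cons.mpr ⟨hb, hw'⟩,
      by rw [List.prod_cons, List.prod_cons, hsb, hprod], by simp [hlen]⟩

theorem wordLength_eq_of_section (p : H →* K) (hp : Set.MapsTo p B C) {s : K → H}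
    (hps : ∀ k, p (s k) = k) (hs₁ : s 1 = 1) (hs : ∀ c ∈ C, ∀ k, ∃ b ∈ B, s (c * k) = b * s k)
    {k : K} (hk : k ∈ Submonoid.closure C) : wordLength B (s k) = wordLength C k := by
  obtain ⟨w, hw, rfl, hlen⟩ := exists_list_length_eq_wordLength hk
  obtain ⟨w', hw', hprod, hlen'⟩ := exists_list_lift hs₁ hs w hw
  refine le_antisymm ?_ ?_
  · rw [← hlen, ← hlen', ← hprod]
    exact wordLength_le_length hw'
  · have hmem : s w.prod ∈ Submonoid.closure B :=
      hprod ▸ Submonoid.list_prod_mem _ fun x hx => Submonoid.subset_closure (hw' x hx)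
    simpa only [hps] using wordLength_map_le p hp hmem

end WordLength

section Colors

variable {a b r n : ℕ}

def colorMap (f : ZMod a →+ ZMod b) (n : ℕ) : G a n →* G b n :=
  SemidirectProduct.map (MonoidHom.compLeft (AddMonoidHom.toMultiplicative f) (Fin n))
    (MonoidHom.id _) fun _ => MonoidHom.ext fun _ => rfl

@[simp]
theorem colorMap_left (f : ZMod a →+ ZMod b) (x : G a n) (j : Fin n) :
    (colorMap f n x).left j = ofAdd (f (toAdd (x.left j))) := rfl

@[simp]
theorem colorMap_right (f : ZMod a →+ ZMod b) (x : G a n) : (colorMap f n x).right = x.right :=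
  rfl

theorem colorMap_colorMap {f : ZMod b →+ ZMod a} {g : ZMod a →+ ZMod b}
    (hfg : ∀ x, f (g x) = x) (x : G a n) : colorMap f n (colorMap g n x) = x := by
  ext j
  · simp [hfg]
  · rfl

def firstColor (r n : ℕ) : Multiplicative (ZMod r) →* G r n :=
  inl.comp (MonoidHom.pi fun j => if (j : ℕ) = 0 then MonoidHom.id _ else 1)

theorem firstColor_left (c : Multiplicative (ZMod r)) (j : Fin n) :
    (firstColor r n c).left j = if (j : ℕ) = 0 then c else 1 := by
  simp only [firstColor, MonoidHom.comp_apply, left_inl, MonoidHom.pi_apply]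
  split_ifs <;> rfl

@[simp]
theorem firstColor_right (c : Multiplicative (ZMod r)) : (firstColor r n c).right = 1 := rfl

theorem colorMap_firstColor (f : ZMod a →+ ZMod b) (c : ZMod a) :
    colorMap f n (firstColor a n (ofAdd c)) = firstColor b n (ofAdd (f c)) := by
  ext j
  · simp only [colorMap_left, firstColor_left]
    split_ifs <;> simp
  · rfl

theorem firstColor_eq_inl_mulSingle (hn : 0 < n) (c : Multiplicative (ZMod r)) :
    firstColor r n c = inl (Pi.mulSingle ⟨0, hn⟩ c) := by
  ext j
  · simp [firstColor_left, Pi.mulSingle_apply, Fin.ext_iff]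
  · rfl

theorem gen_zero_eq : gen r n 0 = firstColor r n (ofAdd 1) := by
  ext j
  · rw [firstColor_left]; rfl
  · rfl

theorem gen_zero_pow (k : ℕ) : gen r n 0 ^ k = firstColor r n (ofAdd (k : ZMod r)) := by
  rw [gen_zero_eq, ← map_pow, ← ofAdd_nsmul, nsmul_one]

theorem gen_eq_inr {i : ℕ} (hi₀ : 0 < i) (hi : i < n) :
    gen r n i = inr (Equiv.swap ⟨i - 1, by omega⟩ ⟨i, hi⟩) := by
  simp only [gen, dif_pos (And.intro hi₀ hi)]
  rfl

theorem colorMap_gen (f : ZMod a →+ ZMod b) {i : ℕ} (hi₀ : 0 < i) (hi : i < n) :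
    colorMap f n (gen a n i) = gen b n i := by
  rw [gen_eq_inr hi₀ hi, gen_eq_inr hi₀ hi]
  ext j
  · simp
  · rfl

theorem gen_inv {i : ℕ} (hi₀ : 0 < i) (hi : i < n) : (gen r n i)⁻¹ = gen r n i := by
  rw [gen_eq_inr hi₀ hi, ← map_inv, Equiv.swap_inv]

end Colors

section Generation

variable {R n : ℕ}

theorem inr_mem_closure_Sset (σ : Equiv.Perm (Fin n)) : inr σ ∈ Subgroup.closure (Sset R n) := by
  cases n with
  | zero => rw [Subsingleton.elim σ 1, map_one]; exact one_mem _
  | succ m =>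
    have hle : Submonoid.closure (Set.range fun j : Fin m ↦ Equiv.swap j.castSucc j.succ) ≤
        ((Subgroup.closure (Sset R (m + 1))).comap inr).toSubmonoid := by
      rw [Submonoid.closure_le]
      rintro _ ⟨j, rfl⟩
      refine Subgroup.subset_closure ⟨j + 1, by omega, ?_⟩
      rw [gen_eq_inr (by omega) (by omega)]
      congr
    exact hle (by rw [Equiv.Perm.mclosure_swap_castSucc_succ]; trivial)

theorem inl_mem_closure_Sset [NeZero R] (hn : 0 < n) (z : Fin n → Multiplicative (ZMod R)) :
    inl z ∈ Subgroup.closure (Sset R n) := by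
  set H := Subgroup.closure (Sset R n)
  have hfirst : ∀ c, inl (Pi.mulSingle ⟨0, hn⟩ c) ∈ H := fun c => by
    rw [← firstColor_eq_inl_mulSingle hn, ← ofAdd_toAdd c, ← ZMod.natCast_zmod_val (toAdd c),
      ← gen_zero_pow]
    exact pow_mem (Subgroup.subset_closure (show gen R n 0 ∈ Sset R n from ⟨0, hn, rfl⟩)) _
  have hsingle : ∀ j c, inl (Pi.mulSingle j c) ∈ H := fun j c => by
    have hconj := H.mul_mem (H.mul_mem (inr_mem_closure_Sset (Equiv.swap ⟨0, hn⟩ j)) (hfirst c))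
      (inr_mem_closure_Sset (Equiv.swap ⟨0, hn⟩ j)⁻¹)
    rw [← inl_aut] at hconj
    change inl (Pi.mulSingle ⟨0, hn⟩ c ∘ (Equiv.swap ⟨0, hn⟩ j).symm) ∈ H at hconj
    rwa [Pi.mulSingle_comp_equiv, Equiv.symm_symm, Equiv.swap_apply_left] at hconj
  rw [← Finset.univ_prod_mulSingle z]
  exact Subgroup.prod_mem (H.comap inl) fun j _ => hsingle j (z j)

theorem mclosure_Sset_eq_top [NeZero R] (hn : 0 < n) : Submonoid.closure (Sset R n) = ⊤ := by
  have : Finite (G R n) := Finite.of_equiv _ SemidirectProduct.equivProd.symm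
  rw [← Subgroup.closure_toSubmonoid_of_finite, eq_top_iff]
  intro g _
  rw [← inl_left_mul_inr_right g]
  exact mul_mem (inl_mem_closure_Sset hn _) (inr_mem_closure_Sset _)

end Generation

section Halving

variable {r n : ℕ}

def doubleColor (hr : 2 ∣ r) : ZMod (r / 2) →+ ZMod r :=
  ZMod.lift (r / 2) ⟨(AddMonoidHom.mulLeft 2).comp (Int.castAddHom (ZMod r)), by
    have h : ((2 * (r / 2) : ℕ) : ZMod r) = 0 := by
      rw [Nat.mul_div_cancel' hr, ZMod.natCast_self]
    rw [Nat.cast_mul, Nat.cast_ofNat] at h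
    simpa only [AddMonoidHom.comp_apply, AddMonoidHom.coe_mulLeft, Int.coe_castAddHom,
      Int.cast_natCast] using h⟩

theorem doubleColor_natCast (hr : 2 ∣ r) (k : ℕ) : doubleColor hr k = 2 * k := by
  rw [← Int.cast_natCast, doubleColor, ZMod.lift_coe]
  simp

def halveColor (hr : 2 ∣ r) : ZMod r →+ ZMod (r / 2) :=
  (AddMonoidHom.mulLeft (2 : ZMod (r / 2))⁻¹).comp
    (ZMod.castHom (Nat.div_dvd_of_dvd hr) (ZMod (r / 2))).toAddMonoidHom

theorem halveColor_doubleColor (hr : 2 ∣ r) (hodd : Odd (r / 2)) (x : ZMod (r / 2)) :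
    halveColor hr (doubleColor hr x) = x := by
  obtain ⟨k, rfl⟩ := ZMod.intCast_surjective x
  have h2 : (2 : ZMod (r / 2)) * (2 : ZMod (r / 2))⁻¹ = 1 := by
    exact_mod_cast ZMod.coe_mul_inv_eq_one 2 (Nat.coprime_two_left.mpr hodd)
  rw [doubleColor, ZMod.lift_coe]
  change (2 : ZMod (r / 2))⁻¹ *
    ZMod.castHom (Nat.div_dvd_of_dvd hr) (ZMod (r / 2)) (2 * (k : ZMod r)) = k
  rw [map_mul, map_ofNat, map_intCast, ← mul_assoc, mul_comm _ (2 : ZMod (r / 2)), h2, one_mul]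

theorem halveColor_half (hr : 2 ∣ r) : halveColor hr (r / 2 : ℕ) = 0 := by
  simp [halveColor]

end Halving

section Inversions

variable {n : ℕ}

theorem signAux_eq_neg_one_pow_invPerm (τ : Equiv.Perm (Fin n)) :
    Equiv.Perm.signAux τ = (-1) ^ invPerm n τ := by
  rw [Equiv.Perm.signAux, Finset.prod_ite, Finset.prod_const, Finset.prod_const_one, mul_one,
    invPerm, Nat.card_eq_fintype_card, Fintype.card_subtype]
  congr 1
  refine Finset.card_nbij' (fun x => (x.2, x.1)) (fun p => ⟨p.2, p.1⟩) ?_ ?_ (fun _ _ => rfl)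
    (fun _ _ => rfl)
  · intro x hx
    simp only [Finset.coe_filter, Set.mem_ofPred_eq, Equiv.Perm.mem_finPairsLT] at hx
    simp only [Finset.coe_filter, Finset.mem_univ, true_and, Set.mem_ofPred_eq]
    exact ⟨hx.1, hx.2.lt_of_ne (τ.injective.ne hx.1.ne')⟩
  · intro p hp
    simp only [Finset.coe_filter, Finset.mem_univ, true_and, Set.mem_ofPred_eq] at hp
    simp only [Finset.coe_filter, Set.mem_ofPred_eq, Equiv.Perm.mem_finPairsLT]
    exact ⟨hp.1, hp.2.le⟩

theorem even_invPerm_one : Even (invPerm n 1) := by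
  rw [← neg_one_pow_eq_one_iff_even (R := ℤˣ) (by decide), ← signAux_eq_neg_one_pow_invPerm,
    Equiv.Perm.signAux_one]

theorem even_invPerm_swap_mul_iff {x y : Fin n} (hxy : x ≠ y) (τ : Equiv.Perm (Fin n)) :
    Even (invPerm n (Equiv.swap x y * τ)) ↔ ¬ Even (invPerm n τ) := by
  have hne : (-1 : ℤˣ) ≠ 1 := by decide
  rw [← neg_one_pow_eq_one_iff_even hne, ← neg_one_pow_eq_one_iff_even hne,
    ← signAux_eq_neg_one_pow_invPerm, ← signAux_eq_neg_one_pow_invPerm,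
    Equiv.Perm.signAux_mul, Equiv.Perm.signAux_swap hxy]
  rcases Int.units_eq_one_or (Equiv.Perm.signAux τ) with h | h <;> rw [h] <;> decide

end Inversions

section Lifting

variable {r n : ℕ}

def halfColor (r n : ℕ) : G r n := gen r n 0 ^ (r / 2)

theorem halfColor_eq : halfColor r n = firstColor r n (ofAdd ((r / 2 : ℕ) : ZMod r)) :=
  gen_zero_pow _

theorem halfColor_mul_self (hr : 2 ∣ r) : halfColor r n * halfColor r n = 1 := by
  rw [halfColor, ← pow_add, ← two_mul, Nat.mul_div_cancel' hr, gen_zero_pow, ZMod.natCast_self,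
    ofAdd_zero, map_one]

theorem agen_eq_halfColor_mul {i : ℕ} (hi : i ≠ 0) : agen r n i = halfColor r n * gen r n i := by
  rw [agen, if_neg hi, halfColor]

theorem commute_halfColor_gen {i : ℕ} (hi : 2 ≤ i) (hin : i < n) :
    Commute (halfColor r n) (gen r n i) := by
  have hfix : ∀ j : Fin n, ((Equiv.swap (⟨i - 1, by omega⟩ : Fin n) ⟨i, hin⟩ j : Fin n) : ℕ) = 0 ↔
      (j : ℕ) = 0 := by
    intro j
    rw [Equiv.swap_apply_def]
    split_ifs <;> simp_all [Fin.ext_iff] <;> omega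
  rw [halfColor_eq, gen_eq_inr (by omega) hin]
  ext j
  · simp only [mul_left, left_inr, Pi.mul_apply, Pi.one_apply, mul_one, one_mul, map_one]
    change _ = (firstColor r n _).left ((Equiv.swap _ _).symm j)
    simp only [firstColor_left, Equiv.symm_swap, hfix]
    rfl
  · simp

theorem colorMap_doubleColor_gen_zero (hr : 2 ∣ r) :
    colorMap (doubleColor hr) n (gen (r / 2) n 0) = agen r n 0 := by
  rw [gen_zero_eq, colorMap_firstColor, agen, if_pos rfl, gen_zero_pow, ← Nat.cast_one,
    doubleColor_natCast]
  norm_num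

theorem smap_eq (hr : 2 ∣ r) [NeZero (r / 2)] (g : G (r / 2) n) :
    smap r n g = (if Even (invPerm n g.right) then 1 else halfColor r n) *
      colorMap (doubleColor hr) n g := by
  have hD : ∀ j, (colorMap (doubleColor hr) n g).left j =
      ofAdd ((2 * zval (r / 2) n g j : ℕ) : ZMod r) := by
    intro j
    rw [colorMap_left, ← ZMod.natCast_zmod_val (toAdd (g.left j)), doubleColor_natCast, zval]
    push_cast
    rfl
  by_cases he : Even (invPerm n g.right)
  · have heven : ¬ invPerm n g.right % 2 = 1 := by rw [Nat.even_iff] at he; omega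
    rw [if_pos he, one_mul]
    ext j
    · simp [smap, heven, hD]
    · rfl
  · have hodd : invPerm n g.right % 2 = 1 := Nat.odd_iff.mp (Nat.not_even_iff_odd.mp he)
    rw [if_neg he, halfColor_eq]
    ext j
    · by_cases hj : (j : ℕ) = 0 <;> simp [smap, hj, hodd, firstColor_left, hD, add_comm]
    · simp [smap]

theorem smap_one (hr : 2 ∣ r) [NeZero (r / 2)] : smap r n 1 = 1 := by
  rw [smap_eq hr, one_right, if_pos even_invPerm_one, map_one, one_mul]

theorem colorMap_halveColor_smap (hr : 2 ∣ r) (hodd : Odd (r / 2)) [NeZero (r / 2)]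
    (g : G (r / 2) n) : colorMap (halveColor hr) n (smap r n g) = g := by
  have hhalf : colorMap (halveColor hr) n (halfColor r n) = 1 := by
    rw [halfColor_eq, colorMap_firstColor, halveColor_half, ofAdd_zero, map_one]
  rw [smap_eq hr, map_mul, colorMap_colorMap (halveColor_doubleColor hr hodd)]
  split_ifs <;> simp [hhalf]

theorem mapsTo_colorMap_halveColor_Aset (hr : 2 ∣ r) (hodd : Odd (r / 2)) (hn : 2 ≤ n) :
    Set.MapsTo (colorMap (halveColor hr) n) (Aset r n) (Sset (r / 2) n) := by
  have hgen : ∀ {i}, 0 < i → i < n → colorMap (halveColor hr) n (agen r n i) = gen (r / 2) n i :=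
    fun hi₀ hi => by
      rw [agen_eq_halfColor_mul hi₀.ne', map_mul, colorMap_gen _ hi₀ hi, halfColor_eq,
        colorMap_firstColor, halveColor_half, ofAdd_zero, map_one, one_mul]
  rintro _ (⟨i, hi, rfl⟩ | rfl)
  · rcases Nat.eq_zero_or_pos i with rfl | hi₀
    · refine ⟨0, by omega, ?_⟩
      rw [← colorMap_doubleColor_gen_zero hr, colorMap_colorMap (halveColor_doubleColor hr hodd)]
    · exact ⟨i, by omega, hgen hi₀ (by omega)⟩
  · exact ⟨1, by omega, by rw [map_inv, hgen one_pos (by omega), gen_inv one_pos (by omega)]⟩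

theorem exists_mem_Aset_smap_gen_mul (hr : 2 ∣ r) [NeZero (r / 2)] (hn : 2 ≤ n) {i : ℕ}
    (hi : i < n) (g : G (r / 2) n) :
    ∃ a ∈ Aset r n, smap r n (gen (r / 2) n i * g) = a * smap r n g := by
  rw [smap_eq hr, smap_eq hr, map_mul]
  set x := colorMap (doubleColor hr) n g
  rcases Nat.eq_zero_or_pos i with rfl | hi₀
  · refine ⟨agen r n 0, Or.inl ⟨0, by omega, rfl⟩, ?_⟩
    have hright : (gen (r / 2) n 0 * g).right = g.right := by
      rw [mul_right, gen_zero_eq, firstColor_right, one_mul]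
    have hcomm : Commute (halfColor r n) (agen r n 0) := (Commute.refl (gen r n 0)).pow_pow _ _
    rw [hright, colorMap_doubleColor_gen_zero hr]
    split_ifs
    · rw [one_mul, one_mul]
    · exact hcomm.left_comm x
  · have hright : (gen (r / 2) n i * g).right =
        Equiv.swap ⟨i - 1, by omega⟩ ⟨i, hi⟩ * g.right := by
      rw [gen_eq_inr hi₀ hi]
      rfl
    have hflip := even_invPerm_swap_mul_iff (x := ⟨i - 1, by omega⟩) (y := ⟨i, hi⟩)
      (by simp [Fin.ext_iff]; omega) g.right
    rw [hright, colorMap_gen _ hi₀ hi]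
    by_cases he : Even (invPerm n g.right)
    · refine ⟨agen r n i, Or.inl ⟨i, by omega, rfl⟩, ?_⟩
      rw [if_neg (hflip.not.mpr (not_not_intro he)), if_pos he, agen_eq_halfColor_mul hi₀.ne',
        one_mul, mul_assoc]
    · rw [if_pos (hflip.mpr he), if_neg he, one_mul]
      rcases (show i = 1 ∨ 2 ≤ i by omega) with rfl | hi₂
      · refine ⟨(agen r n 1)⁻¹, Or.inr rfl, ?_⟩
        rw [agen_eq_halfColor_mul one_ne_zero, mul_inv_rev, gen_inv one_pos hi, mul_assoc,
          inv_mul_cancel_left]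
      · refine ⟨agen r n i, Or.inl ⟨i, by omega, rfl⟩, ?_⟩
        rw [agen_eq_halfColor_mul hi₀.ne', (commute_halfColor_gen hi₂ hi).eq, mul_assoc,
          ← mul_assoc (halfColor r n), halfColor_mul_self hr, one_mul]

end Lifting

end ACP

/-- `ℓ_𝒜(π₀) = ℓ_G(p(π))` where `π₀ = s(p(π))` and `ℓ_G` is word length in
`G_{r/2,n}` with respect to its Coxeter-like generators. -/
theorem length_section_eq (r n : ℕ) (hn : 2 ≤ n) (hr : r % 4 = 2)
    (π : ACP.G r n) :
    ACP.wordLength (ACP.Aset r n) (ACP.smap r n (ACP.pmap r n π)) =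
      ACP.wordLength (ACP.Sset (r / 2) n) (ACP.pmap r n π) := by
  have h2 : 2 ∣ r := by omega
  have hodd : Odd (r / 2) := Nat.odd_iff.mpr (by omega)
  have : NeZero (r / 2) := ⟨by omega⟩
  refine ACP.wordLength_eq_of_section _ (ACP.mapsTo_colorMap_halveColor_Aset h2 hodd hn)
    (ACP.colorMap_halveColor_smap h2 hodd) (ACP.smap_one h2)
    (fun _ ⟨_, hi, hc⟩ g => hc ▸ ACP.exists_mem_Aset_smap_gen_mul h2 hn hi g)
    (by rw [ACP.mclosure_Sset_eq_top (by omega)]; trivial)
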